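/- arXiv:1310.2436 — 4 statements merged into one kernel-verified Lean document; each statement's English description precedes it below -/
import Mathlib

section
/- The system z_1 - 1/(z_1 z_2) - 1/z_1 = 0, z_2 - 1/(z_1 z_2) - 1/z_2 = 0 has exactly 5 distinct solutions in (ℂ*)^2, and every solution satisfies either z_1 = z_2 or z_1 z_2 = -1. -/
/-!
Writing `f = z₁ + z₂ + 1/(z₁z₂) + 1/z₁ + 1/z₂`, the two equations are `z₁ ∂₁f = z₂ ∂₂f = 0`.
Clearing denominators gives `z₁²z₂ = z₂ + 1` and `z₂²z₁ = z₁ + 1`, whose difference factors as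
`(z₁ - z₂)(z₁z₂ + 1) = 0`. On the diagonal the solutions are the roots of `z³ - z - 1`, and on
`z₁z₂ = -1` they are the points `(z, -z - 1)` with `z² + z - 1 = 0`. Both polynomials are
separable (discriminants `-23` and `5`), and the two families are disjoint, giving `3 + 2` points.
-/

open Polynomial

namespace Polynomial

variable {K : Type*} [Field K]

theorem C_inv_mul_cancel {a : K} (ha : a ≠ 0) : C a⁻¹ * C a = 1 := by
  rw [← C_mul, inv_mul_cancel₀ ha, C_1]

-- Bezout identity `(2X + 1)² - 4(X² + X - 1) = 5`.
theorem separable_X_sq_add_X_sub_one (h5 : (5 : K) ≠ 0) : (X ^ 2 + X - 1 : K[X]).Separable := by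
  rw [separable_def']
  refine ⟨-4 * C 5⁻¹, C 5⁻¹ * (2 * X + 1), ?_⟩
  have h := C_inv_mul_cancel h5
  simp only [derivative_sub, derivative_add, derivative_X_pow, derivative_X, derivative_one,
    map_ofNat, Nat.cast_ofNat] at h ⊢
  linear_combination h

-- Bezout identity `(18X - 27)(X³ - X - 1) + (-6X² + 9X + 4)(3X² - 1) = 23`.
theorem separable_X_pow_three_sub_X_sub_one (h23 : (23 : K) ≠ 0) :
    (X ^ 3 - X - 1 : K[X]).Separable := by
  rw [separable_def']
  refine ⟨C 23⁻¹ * (18 * X - 27), C 23⁻¹ * (-6 * X ^ 2 + 9 * X + 4), ?_⟩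
  have h := C_inv_mul_cancel h23
  simp only [derivative_sub, derivative_X_pow, derivative_X, derivative_one, map_ofNat,
    Nat.cast_ofNat] at h ⊢
  linear_combination h

theorem ncard_setOf_isRoot [IsAlgClosed K] {p : K[X]} (hp : p.Separable) :
    {z | p.IsRoot z}.ncard = p.natDegree := by
  have hroots : {z | p.IsRoot z} = p.rootSet K := by
    ext z
    simp [mem_rootSet_of_ne hp.ne_zero]
  rw [hroots, Set.ncard_eq_toFinset_card', Set.toFinset_card,
    card_rootSet_eq_natDegree hp (IsAlgClosed.splits _)]

end Polynomial

namespace LandauGinzburgBl2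

variable {K : Type*} [Field K]

def IsCriticalPoint (p : K × K) : Prop :=
  p.1 ≠ 0 ∧ p.2 ≠ 0 ∧ p.1 - 1 / (p.1 * p.2) - 1 / p.1 = 0 ∧ p.2 - 1 / (p.1 * p.2) - 1 / p.2 = 0

theorem sub_one_div_mul_sub_one_div_eq_zero_iff {z w : K} (hz : z ≠ 0) (hw : w ≠ 0) :
    z - 1 / (z * w) - 1 / z = 0 ↔ z ^ 2 * w - w - 1 = 0 := by
  field_simp
  constructor <;> intro h <;> linear_combination h

theorem isCriticalPoint_iff_of_ne_zero {z w : K} (hz : z ≠ 0) (hw : w ≠ 0) :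
    IsCriticalPoint (z, w) ↔ z ^ 2 * w - w - 1 = 0 ∧ w ^ 2 * z - z - 1 = 0 := by
  rw [IsCriticalPoint, sub_one_div_mul_sub_one_div_eq_zero_iff hz hw, mul_comm z w,
    sub_one_div_mul_sub_one_div_eq_zero_iff hw hz]
  simp [hz, hw]

theorem IsCriticalPoint.eq_or_mul_eq_neg_one {z w : K} (h : IsCriticalPoint (z, w)) :
    z = w ∨ z * w = -1 := by
  obtain ⟨e₁, e₂⟩ := (isCriticalPoint_iff_of_ne_zero h.1 h.2.1).1 h
  have : (z - w) * (z * w + 1) = 0 := by linear_combination e₁ - e₂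
  rcases mul_eq_zero.1 this with h | h
  · exact .inl (by linear_combination h)
  · exact .inr (by linear_combination h)

theorem isCriticalPoint_iff {z w : K} :
    IsCriticalPoint (z, w) ↔
      (w = z ∧ z ^ 3 - z - 1 = 0) ∨ (w = -z - 1 ∧ z ^ 2 + z - 1 = 0) := by
  constructor
  · intro h
    obtain ⟨e₁, -⟩ := (isCriticalPoint_iff_of_ne_zero h.1 h.2.1).1 h
    rcases h.eq_or_mul_eq_neg_one with hzw | hzw
    · subst hzw
      exact .inl ⟨rfl, by linear_combination e₁⟩
    · have hw : w = -z - 1 := by linear_combination z * hzw - e₁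
      exact .inr ⟨hw, by linear_combination z * hw - hzw⟩
  · rintro (⟨hw, hz⟩ | ⟨hw, hz⟩) <;> rw [hw]
    · have hz0 : z ≠ 0 := by rintro rfl; norm_num at hz
      rw [isCriticalPoint_iff_of_ne_zero hz0 hz0]
      exact ⟨by linear_combination hz, by linear_combination hz⟩
    · have hz0 : z ≠ 0 := by rintro rfl; norm_num at hz
      have hw0 : -z - 1 ≠ 0 := by
        intro hw
        obtain rfl : z = -1 := by linear_combination -hw
        norm_num at hz
      rw [isCriticalPoint_iff_of_ne_zero hz0 hw0]
      exact ⟨by linear_combination -z * hz, by linear_combination (z + 1) * hz⟩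

theorem setOf_isCriticalPoint :
    {p : K × K | IsCriticalPoint p} =
      (fun z ↦ (z, z)) '' {z | (X ^ 3 - X - 1 : K[X]).IsRoot z} ∪
        (fun z ↦ (z, -z - 1)) '' {z | (X ^ 2 + X - 1 : K[X]).IsRoot z} := by
  ext ⟨z, w⟩
  simp only [Set.mem_ofPred_eq, IsRoot.def, Set.mem_union, Set.mem_image, Prod.mk.injEq,
    eval_sub, eval_add, eval_pow, eval_X, eval_one, isCriticalPoint_iff]
  constructor
  · rintro (⟨hw, hz⟩ | ⟨hw, hz⟩)
    · exact .inl ⟨z, hz, rfl, hw.symm⟩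
    · exact .inr ⟨z, hz, rfl, hw.symm⟩
  · rintro (⟨y, hy, rfl, rfl⟩ | ⟨y, hy, rfl, rfl⟩)
    · exact .inl ⟨rfl, hy⟩
    · exact .inr ⟨rfl, hy⟩

theorem ncard_setOf_isCriticalPoint [IsAlgClosed K] (h5 : (5 : K) ≠ 0) (h23 : (23 : K) ≠ 0) :
    {p : K × K | IsCriticalPoint p}.ncard = 5 := by
  have hcubic := separable_X_pow_three_sub_X_sub_one h23
  have hquad := separable_X_sq_add_X_sub_one h5
  have hdisj : Disjoint ((fun z ↦ (z, z)) '' {z | (X ^ 3 - X - 1 : K[X]).IsRoot z})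
      ((fun z ↦ (z, -z - 1)) '' {z | (X ^ 2 + X - 1 : K[X]).IsRoot z}) := by
    rw [Set.disjoint_left]
    rintro _ ⟨z, -, rfl⟩ ⟨y, hy, hzy⟩
    simp only [Prod.mk.injEq, Set.mem_ofPred_eq, IsRoot.def, eval_sub, eval_add, eval_pow, eval_X,
      eval_one] at hzy hy
    exact h5 (by linear_combination (2 * y + 1) * (hzy.1 - hzy.2) - 4 * hy)
  rw [setOf_isCriticalPoint, Set.ncard_union_eq hdisj
      ((finite_setOfPred_isRoot hcubic.ne_zero).image _)
      ((finite_setOfPred_isRoot hquad.ne_zero).image _),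
    Set.ncard_image_of_injective _ fun _ _ h ↦ (Prod.mk.inj h).1,
    Set.ncard_image_of_injective _ fun _ _ h ↦ (Prod.mk.inj h).1,
    ncard_setOf_isRoot hcubic, ncard_setOf_isRoot hquad,
    show (X ^ 3 - X - 1 : K[X]).natDegree = 3 by compute_degree!,
    show (X ^ 2 + X - 1 : K[X]).natDegree = 2 by compute_degree!]

end LandauGinzburgBl2

/-- The Landau-Ginzburg system of Bl₂(ℙ²): `z₁ - 1/(z₁z₂) - 1/z₁ = 0`,
`z₂ - 1/(z₁z₂) - 1/z₂ = 0` has exactly 5 distinct solutions in (ℂ*)², and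
every solution satisfies `z₁ = z₂` or `z₁z₂ = -1`. -/
theorem stmt4 :
    Set.ncard {p : ℂ × ℂ | p.1 ≠ 0 ∧ p.2 ≠ 0 ∧
        p.1 - 1 / (p.1 * p.2) - 1 / p.1 = 0 ∧
        p.2 - 1 / (p.1 * p.2) - 1 / p.2 = 0} = 5 ∧
    ∀ p : ℂ × ℂ, p.1 ≠ 0 → p.2 ≠ 0 →
      p.1 - 1 / (p.1 * p.2) - 1 / p.1 = 0 →
      p.2 - 1 / (p.1 * p.2) - 1 / p.2 = 0 →
      p.1 = p.2 ∨ p.1 * p.2 = -1 :=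
  ⟨LandauGinzburgBl2.ncard_setOf_isCriticalPoint (by norm_num) (by norm_num),
    fun _ hz hw e₁ e₂ ↦ LandauGinzburgBl2.IsCriticalPoint.eq_or_mul_eq_neg_one ⟨hz, hw, e₁, e₂⟩⟩
end

section
/- The system z_1 + z_1 z_2 - 1/(z_1 z_2) - 1/z_1 = 0, z_2 + z_1 z_2 - 1/(z_1 z_2) - 1/z_2 = 0 has exactly 6 solutions in (ℂ*)^2, namely (1,1), (ω,ω), (ω²,ω²) where ω = e^{2πi/3}, together with (1,−1), (−1,1), (−1,−1). -/
/-!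
Up to the factors `z₁` and `z₂`, the equations are `∂f/∂z₁ = ∂f/∂z₂ = 0` for the potential `f`.
Clearing denominators gives `z²w + z²w² = 1 + w` and `w²z + w²z² = 1 + z`, whose difference is
`(z - w)(zw + 1) = 0`. On the diagonal `z = w` the equation becomes `(z + 1)(z³ - 1) = 0`,
giving `±1, ω, ω²`; on the hyperbola `zw = -1` it becomes `w = -z`, hence `z² = 1`.
All of this works over any field containing a primitive cube root of unity `ω`, and the six
solutions are distinct as soon as `2 ≠ 0`.
-/

section

variable {K : Type*} [Field K]

theorem add_mul_sub_one_div_mul_sub_one_div_eq_zero_iff {z w : K} (hz : z ≠ 0) (hw : w ≠ 0) :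
    z + z * w - 1 / (z * w) - 1 / z = 0 ↔ z ^ 2 * w + z ^ 2 * w ^ 2 - 1 - w = 0 := by
  have h : z + z * w - 1 / (z * w) - 1 / z = (z ^ 2 * w + z ^ 2 * w ^ 2 - 1 - w) / (z * w) := by
    field_simp
  rw [h, div_eq_zero_iff, or_iff_left (mul_ne_zero hz hw)]

namespace IsPrimitiveRoot

variable {ω : K} (hω : IsPrimitiveRoot ω 3)
include hω

theorem pow_three_eq_one_iff {z : K} : z ^ 3 = 1 ↔ z = 1 ∨ z = ω ∨ z = ω ^ 2 := by
  constructor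
  · intro hz
    obtain ⟨i, hi, rfl⟩ := hω.eq_pow_of_pow_eq_one hz
    interval_cases i <;> simp
  · rintro (rfl | rfl | rfl)
    · exact one_pow 3
    · exact hω.pow_eq_one
    · rw [← pow_mul, mul_comm, pow_mul, hω.pow_eq_one, one_pow]

theorem landauGinzburg_critical_iff {z w : K} :
    (z ^ 2 * w + z ^ 2 * w ^ 2 - 1 - w = 0 ∧ w ^ 2 * z + w ^ 2 * z ^ 2 - 1 - z = 0) ↔
      (z, w) ∈ ({(1, 1), (ω, ω), (ω ^ 2, ω ^ 2), (1, -1), (-1, 1), (-1, -1)} : Set (K × K)) := by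
  simp only [Set.mem_insert_iff, Set.mem_singleton_iff, Prod.mk.injEq]
  constructor
  · rintro ⟨e₁, e₂⟩
    have hdiff : (z - w) * (z * w + 1) = 0 := by linear_combination e₁ - e₂
    rcases mul_eq_zero.mp hdiff with hzw | hzw
    · obtain rfl : z = w := sub_eq_zero.mp hzw
      have : (z + 1) * (z ^ 3 - 1) = 0 := by linear_combination e₁
      rcases mul_eq_zero.mp this with h | h
      · obtain rfl : z = -1 := eq_neg_of_add_eq_zero_left h
        simp
      · rcases hω.pow_three_eq_one_iff.mp (sub_eq_zero.mp h) with rfl | rfl | rfl <;> simp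
    · have hw : w = -z := by linear_combination -e₁ + (z + z * w - 1) * hzw
      subst hw
      have : (z - 1) * (z + 1) = 0 := by linear_combination -hzw
      rcases mul_eq_zero.mp this with h | h
      · obtain rfl : z = 1 := sub_eq_zero.mp h
        simp
      · obtain rfl : z = -1 := eq_neg_of_add_eq_zero_left h
        simp
  · have h3 := hω.pow_eq_one
    rintro (⟨h₁, h₂⟩ | ⟨h₁, h₂⟩ | ⟨h₁, h₂⟩ | ⟨h₁, h₂⟩ | ⟨h₁, h₂⟩ | ⟨h₁, h₂⟩) <;> subst z w
    · norm_num
    · constructor <;> linear_combination (1 + ω) * h3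
    · constructor <;> linear_combination (1 + ω ^ 2) * (ω ^ 3 + 1) * h3
    all_goals norm_num

theorem setOf_landauGinzburg_eq :
    {p : K × K | p.1 ≠ 0 ∧ p.2 ≠ 0 ∧
        p.1 + p.1 * p.2 - 1 / (p.1 * p.2) - 1 / p.1 = 0 ∧
        p.2 + p.1 * p.2 - 1 / (p.1 * p.2) - 1 / p.2 = 0} =
      ({(1, 1), (ω, ω), (ω ^ 2, ω ^ 2), (1, -1), (-1, 1), (-1, -1)} : Set (K × K)) := by
  ext ⟨z, w⟩
  rw [← hω.landauGinzburg_critical_iff, Set.mem_ofPred_eq, mul_comm z w]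
  constructor
  · rintro ⟨hz, hw, h₁, h₂⟩
    rw [mul_comm w z] at h₁
    exact ⟨(add_mul_sub_one_div_mul_sub_one_div_eq_zero_iff hz hw).mp h₁,
      (add_mul_sub_one_div_mul_sub_one_div_eq_zero_iff hw hz).mp h₂⟩
  · rintro ⟨e₁, e₂⟩
    have hz : z ≠ 0 := by rintro rfl; simp at e₂
    have hw : w ≠ 0 := by rintro rfl; simp at e₁
    refine ⟨hz, hw, ?_, (add_mul_sub_one_div_mul_sub_one_div_eq_zero_iff hw hz).mpr e₂⟩
    rw [mul_comm w z]
    exact (add_mul_sub_one_div_mul_sub_one_div_eq_zero_iff hz hw).mpr e₁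

theorem ncard_landauGinzburg_solutions (h2 : (2 : K) ≠ 0) :
    ({(1, 1), (ω, ω), (ω ^ 2, ω ^ 2), (1, -1), (-1, 1), (-1, -1)} : Set (K × K)).ncard = 6 := by
  have ne_neg_one {z : K} (hz : z ^ 3 = 1) : z ≠ -1 := by
    rintro rfl
    exact h2 (by linear_combination -hz)
  have hω1 : ω ≠ 1 := hω.ne_one (by norm_num)
  have hω21 : ω ^ 2 ≠ 1 := hω.pow_ne_one_of_pos_of_lt two_ne_zero (by norm_num)
  have hωω2 : ω ≠ ω ^ 2 := fun h ↦
    hω1 (mul_left_cancel₀ (hω.ne_zero three_ne_zero) (by rw [mul_one, ← sq, ← h]))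
  have hωn1 : ω ≠ -1 := ne_neg_one hω.pow_eq_one
  have hω2n1 : ω ^ 2 ≠ -1 := ne_neg_one (hω.pow_three_eq_one_iff.mpr (by simp))
  have h1n1 : (1 : K) ≠ -1 := ne_neg_one (one_pow 3)
  simp [Set.ncard_insert_of_notMem, hω1, hω21, hωω2, hωn1, hω2n1, h1n1, hω1.symm, hω21.symm,
    h1n1.symm]

end IsPrimitiveRoot

end

open Complex in
/-- The Landau-Ginzburg system of Bl₃(ℙ²): `z₁ + z₁z₂ - 1/(z₁z₂) - 1/z₁ = 0`,
`z₂ + z₁z₂ - 1/(z₁z₂) - 1/z₂ = 0` has exactly 6 solutions in (ℂ*)², namely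
`(1,1)`, `(ω,ω)`, `(ω²,ω²)` with `ω = e^{2πi/3}`, together with
`(1,-1)`, `(-1,1)`, `(-1,-1)`. -/
theorem stmt5 :
    {p : ℂ × ℂ | p.1 ≠ 0 ∧ p.2 ≠ 0 ∧
        p.1 + p.1 * p.2 - 1 / (p.1 * p.2) - 1 / p.1 = 0 ∧
        p.2 + p.1 * p.2 - 1 / (p.1 * p.2) - 1 / p.2 = 0} =
      ({(1, 1), (exp (2 * Real.pi * I / 3), exp (2 * Real.pi * I / 3)),
        (exp (2 * Real.pi * I / 3) ^ 2, exp (2 * Real.pi * I / 3) ^ 2),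
        (1, -1), (-1, 1), (-1, -1)} : Set (ℂ × ℂ)) ∧
    Set.ncard {p : ℂ × ℂ | p.1 ≠ 0 ∧ p.2 ≠ 0 ∧
        p.1 + p.1 * p.2 - 1 / (p.1 * p.2) - 1 / p.1 = 0 ∧
        p.2 + p.1 * p.2 - 1 / (p.1 * p.2) - 1 / p.2 = 0} = 6 := by
  have hω : IsPrimitiveRoot (exp (2 * Real.pi * I / 3)) 3 := by
    exact_mod_cast isPrimitiveRoot_exp 3 three_ne_zero
  rw [hω.setOf_landauGinzburg_eq]
  exact ⟨rfl, hω.ncard_landauGinzburg_solutions two_ne_zero⟩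
end

section
/- The system z_1 + 1/z_2 + 1/z_3 - 1/z_1 = 0, z_2 - z_1/z_2 = 0, z_3 - z_1/z_3 = 0 has exactly 8 distinct solutions in (ℂ*)^3, and every solution satisfies z_2^2 = z_1, z_3^2 = z_1. -/
/-!
From `z₂ - z₁/z₂ = 0` and `z₃ - z₁/z₃ = 0` we get `z₂² = z₃² = z₁`, so `z₃ = ±z₂`. Clearing
denominators in the first equation, a solution is `(z², z, z)` with `z⁴ + 2z - 1 = 0` or
`(z², z, -z)` with `z⁴ = 1`. Both quartics are separable, so each contributes four solutions,
and the two families are disjoint because `z ≠ 0`.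
-/

open Polynomial

namespace Polynomial

variable {K : Type*} [Field K] [IsAlgClosed K]

theorem separable_iff_forall_eval_derivative_ne_zero {p : K[X]} :
    p.Separable ↔ ∀ z, p.eval z = 0 → p.derivative.eval z ≠ 0 := by
  simp only [Separable, isCoprime_iff_aeval_ne_zero_of_isAlgClosed (k := K) K, coe_aeval_eq_eval,
    ← imp_iff_not_or]

theorem ncard_setOf_eval_eq_zero_of_separable {p : K[X]} (hp : p.Separable) :
    {z | p.eval z = 0}.ncard = p.natDegree := by
  have hroots : {z | p.eval z = 0} = p.rootSet K := by
    ext z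
    simp [mem_rootSet_of_ne hp.ne_zero]
  rw [hroots, ← Nat.card_coe_set_eq, Nat.card_eq_fintype_card,
    card_rootSet_eq_natDegree hp (IsAlgClosed.splits _)]

end Polynomial

theorem Complex.ncard_setOf_pow_eq_one {n : ℕ} (hn : n ≠ 0) :
    {z : ℂ | z ^ n = 1}.ncard = n := by
  have h := (Complex.isPrimitiveRoot_exp n hn).card_nthRootsFinset
  rw [← Set.ncard_coe_finset] at h
  convert h using 2
  ext z
  simp [Nat.pos_of_ne_zero hn]

theorem ncard_setOf_pow_four_add_two_mul_sub_one_eq_zero :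
    {z : ℂ | z ^ 4 + 2 * z - 1 = 0}.ncard = 4 := by
  have hsep : (X ^ 4 + C 2 * X - 1 : ℂ[X]).Separable := by
    refine separable_iff_forall_eval_derivative_ne_zero.2 fun z hz hz' => ?_
    simp only [eval_sub, eval_add, eval_pow, eval_X, eval_mul, eval_C, eval_one, derivative_sub,
      derivative_X_pow_succ, Nat.cast_ofNat, map_add, map_one, derivative_mul,
      derivative_C, zero_mul, derivative_X, mul_one, zero_add, derivative_one, sub_zero] at hz hz'
    -- eliminating `z ^ 4` between `z⁴ + 2z - 1 = 0` and `4z³ + 2 = 0` leaves `6z = 4`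
    have hz_eq : z = 2 / 3 := by linear_combination (2 / 3) * hz - (z / 6) * hz'
    subst hz_eq
    norm_num at hz
  have hdeg : (X ^ 4 + C 2 * X - 1 : ℂ[X]).natDegree = 4 := by compute_degree!
  simpa [hdeg] using ncard_setOf_eval_eq_zero_of_separable hsep

theorem sub_div_eq_zero_iff_sq_eq {K : Type*} [Field K] {a b : K} (hb : b ≠ 0) :
    b - a / b = 0 ↔ b ^ 2 = a := by
  rw [sub_eq_zero, eq_div_iff hb, sq]

theorem landauGinzburg_system_iff {K : Type*} [Field K] {a b c : K} :
    (a ≠ 0 ∧ b ≠ 0 ∧ c ≠ 0 ∧ a + 1 / b + 1 / c - 1 / a = 0 ∧ b - a / b = 0 ∧ c - a / c = 0) ↔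
      (a = b ^ 2 ∧ c = b ∧ b ^ 4 + 2 * b - 1 = 0) ∨ (a = b ^ 2 ∧ c = -b ∧ b ^ 4 = 1) := by
  constructor
  · rintro ⟨-, hb, hc, h1, h2, h3⟩
    rw [sub_div_eq_zero_iff_sq_eq hb] at h2
    rw [sub_div_eq_zero_iff_sq_eq hc, ← h2, sq_eq_sq_iff_eq_or_eq_neg] at h3
    subst h2
    rcases h3 with rfl | rfl
    · left
      field_simp at h1
      exact ⟨rfl, rfl, by linear_combination h1⟩
    · right
      field_simp at h1
      exact ⟨rfl, rfl, by linear_combination h1⟩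
  · rintro (⟨rfl, hc, h⟩ | ⟨rfl, hc, h⟩) <;> subst c
    · have hb : b ≠ 0 := by rintro rfl; norm_num at h
      have h2 := (sub_div_eq_zero_iff_sq_eq hb).2 rfl
      refine ⟨pow_ne_zero 2 hb, hb, hb, ?_, h2, h2⟩
      field_simp
      linear_combination h
    · have hb : b ≠ 0 := by rintro rfl; norm_num at h
      refine ⟨pow_ne_zero 2 hb, hb, neg_ne_zero.2 hb, ?_, (sub_div_eq_zero_iff_sq_eq hb).2 rfl,
        (sub_div_eq_zero_iff_sq_eq (neg_ne_zero.2 hb)).2 (neg_sq b)⟩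
      field_simp
      linear_combination h

theorem landauGinzburg_solutions_eq :
    {p : ℂ × ℂ × ℂ | p.1 ≠ 0 ∧ p.2.1 ≠ 0 ∧ p.2.2 ≠ 0 ∧
        p.1 + 1 / p.2.1 + 1 / p.2.2 - 1 / p.1 = 0 ∧
        p.2.1 - p.1 / p.2.1 = 0 ∧ p.2.2 - p.1 / p.2.2 = 0} =
      (fun z : ℂ => (z ^ 2, z, z)) '' {z | z ^ 4 + 2 * z - 1 = 0} ∪
        (fun z : ℂ => (z ^ 2, z, -z)) '' {z | z ^ 4 = 1} := by
  ext ⟨a, b, c⟩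
  simp only [Set.mem_ofPred_eq, Set.mem_union, Set.mem_image, Prod.mk.injEq,
    landauGinzburg_system_iff]
  aesop

/-- The Landau-Ginzburg system of ℙ(𝒪_{ℙ¹×ℙ¹} ⊕ 𝒪_{ℙ¹×ℙ¹}(1,1)):
`z₁ + 1/z₂ + 1/z₃ - 1/z₁ = 0`, `z₂ - z₁/z₂ = 0`, `z₃ - z₁/z₃ = 0` has exactly
8 distinct solutions in (ℂ*)³, and every solution satisfies `z₂² = z₁` and
`z₃² = z₁`. -/
theorem stmt9 :
    Set.ncard {p : ℂ × ℂ × ℂ | p.1 ≠ 0 ∧ p.2.1 ≠ 0 ∧ p.2.2 ≠ 0 ∧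
        p.1 + 1 / p.2.1 + 1 / p.2.2 - 1 / p.1 = 0 ∧
        p.2.1 - p.1 / p.2.1 = 0 ∧ p.2.2 - p.1 / p.2.2 = 0} = 8 ∧
    ∀ p : ℂ × ℂ × ℂ, p.1 ≠ 0 → p.2.1 ≠ 0 → p.2.2 ≠ 0 →
      p.1 + 1 / p.2.1 + 1 / p.2.2 - 1 / p.1 = 0 →
      p.2.1 - p.1 / p.2.1 = 0 → p.2.2 - p.1 / p.2.2 = 0 →
      p.2.1 ^ 2 = p.1 ∧ p.2.2 ^ 2 = p.1 := by
  refine ⟨?_, fun p _ hb hc _ h2 h3 =>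
    ⟨(sub_div_eq_zero_iff_sq_eq hb).1 h2, (sub_div_eq_zero_iff_sq_eq hc).1 h3⟩⟩
  have hquartic := ncard_setOf_pow_four_add_two_mul_sub_one_eq_zero
  have hunity := Complex.ncard_setOf_pow_eq_one four_ne_zero
  have hdisj : Disjoint ((fun z : ℂ => (z ^ 2, z, z)) '' {z | z ^ 4 + 2 * z - 1 = 0})
      ((fun z : ℂ => (z ^ 2, z, -z)) '' {z | z ^ 4 = 1}) := by
    rw [Set.disjoint_left]
    rintro _ ⟨x, -, rfl⟩ ⟨y, hy, hxy⟩
    simp only [Prod.mk.injEq] at hxy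
    have hy0 : y = 0 := by linear_combination (hxy.2.1 - hxy.2.2) / 2
    simp [hy0] at hy
  rw [landauGinzburg_solutions_eq,
    Set.ncard_union_eq hdisj ((Set.finite_of_ncard_pos (by omega)).image _)
      ((Set.finite_of_ncard_pos (by omega)).image _),
    Set.ncard_image_of_injective _ fun x y h => congrArg (·.2.1) h,
    Set.ncard_image_of_injective _ fun x y h => congrArg (·.2.1) h, hquartic, hunity]
end

section
/- For the potential f = z_1 + z_2 + z_3 + z_1/z_2 + 1/(z_1 z_3) + 1/z_1 on (ℂ*)^3, the system z_1 + z_1/z_2 - 1/(z_1 z_3) - 1/z_1 = 0, z_2 - z_1/z_2 = 0, z_3 - 1/(z_1 z_3) = 0 has exactly 8 distinct solutions in (ℂ*)^3, including (1,1,1), (1,−1,−1), (−1,i,i), (−1,−i,−i). -/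
open Complex

noncomputable section LGAux10

set_option maxHeartbeats 1000000

private def sq5 : ℂ := Real.sqrt 5
private def sq3 : ℂ := Real.sqrt 3
private def wA : ℂ := (-1 + sq5)/2
private def wB : ℂ := (-1 - sq5)/2
private def wC : ℂ := (-1 + sq3*I)/2
private def wD : ℂ := (-1 - sq3*I)/2

private lemma hsq5 : sq5^2 = 5 := by
  have : (Real.sqrt 5)^2 = 5 := Real.sq_sqrt (by norm_num)
  unfold sq5; norm_cast

private lemma hsq3 : sq3^2 = 3 := by
  have : (Real.sqrt 3)^2 = 3 := Real.sq_sqrt (by norm_num)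
  unfold sq3; norm_cast

private lemma hA : wA^2 + wA - 1 = 0 := by
  unfold wA; linear_combination (1/4)*hsq5
private lemma hB : wB^2 + wB - 1 = 0 := by
  unfold wB; linear_combination (1/4)*hsq5
private lemma hC : wC^2 + wC + 1 = 0 := by
  unfold wC; linear_combination (Complex.I^2/4)*hsq3 + (3/4)*Complex.I_sq
private lemma hD : wD^2 + wD + 1 = 0 := by
  unfold wD; linear_combination (Complex.I^2/4)*hsq3 + (3/4)*Complex.I_sq

private def LGset : Set (ℂ × ℂ × ℂ) :=
  {p : ℂ × ℂ × ℂ | p.1 ≠ 0 ∧ p.2.1 ≠ 0 ∧ p.2.2 ≠ 0 ∧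
      p.1 + p.1 / p.2.1 - 1 / (p.1 * p.2.2) - 1 / p.1 = 0 ∧
      p.2.1 - p.1 / p.2.1 = 0 ∧ p.2.2 - 1 / (p.1 * p.2.2) = 0}

private lemma sol_of (w v : ℂ) (hw : w ≠ 0) (hv : v ≠ 0) (h13 : w^2*v^2 = 1)
    (h1 : w^2 + w - v - v^2 = 0) : ((w^2, w, v) : ℂ × ℂ × ℂ) ∈ LGset := by
  have i1 : 1/(w^2*v) = v := by field_simp; linear_combination -h13
  have i2 : 1/w^2 = v^2 := by field_simp; linear_combination -h13
  have i3 : w^2/w = w := by field_simp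
  refine ⟨pow_ne_zero 2 hw, hw, hv, ?_, ?_, ?_⟩
  · show w^2 + w^2/w - 1/(w^2*v) - 1/w^2 = 0
    rw [i1, i2, i3]; exact h1
  · show w - w^2/w = 0
    rw [i3]; ring
  · show v - 1/(w^2*v) = 0
    rw [i1]; ring

private lemma mem_iff (p : ℂ × ℂ × ℂ) : p ∈ LGset ↔
    p = ((1:ℂ), (1:ℂ), (1:ℂ)) ∨ p = (1, -1, -1) ∨ p = (-1, I, I) ∨ p = (-1, -I, -I) ∨
    p = (wA^2, wA, -wA-1) ∨ p = (wB^2, wB, -wB-1) ∨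
    p = (wC^2, wC, -wC-1) ∨ p = (wD^2, wD, -wD-1) := by
  constructor
  · intro hp
    obtain ⟨z1, z2, z3⟩ := p
    obtain ⟨h1, h2, h3, e1, e2, e3⟩ := hp
    simp only at h1 h2 h3 e1 e2 e3
    have hz1 : z1 = z2^2 := by
      field_simp at e2; linear_combination -e2
    subst hz1
    have key : z2^2*z3^2 = 1 := by
      field_simp at e3; linear_combination e3
    have hfac : (z2 - z3) * (z2 + z3 + 1) = 0 := by
      field_simp at e1
      have h' : z2^3 * ((z2 - z3) * (z2 + z3 + 1)) = 0 := by
        linear_combination z2^3*z3 * e1 - (z2^3*z3^2 + z2^3*z3 + z2^3*((z2 - z3)*(z2 + z3 + 1))) * key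
      rcases mul_eq_zero.mp h' with h | h
      · exact absurd h (pow_ne_zero _ h2)
      · exact h
    rcases mul_eq_zero.mp hfac with h | h
    · -- z2 = z3; subst eliminates z2, leaving z3
      have h23 : z3 = z2 := by linear_combination -h
      subst h23
      have hq : (z3-1)*((z3+1)*((z3-I)*(z3+I))) = 0 := by
        linear_combination key - (z3^2-1)*Complex.I_sq
      rcases mul_eq_zero.mp hq with h' | hq
      · obtain rfl : z3 = 1 := by linear_combination h'
        exact Or.inl (by norm_num)
      rcases mul_eq_zero.mp hq with h' | hq
      · obtain rfl : z3 = -1 := by linear_combination h'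
        exact Or.inr (Or.inl (by norm_num))
      rcases mul_eq_zero.mp hq with h' | h'
      · obtain rfl : z3 = I := by linear_combination h'
        exact Or.inr (Or.inr (Or.inl (by rw [Complex.I_sq])))
      · obtain rfl : z3 = -I := by linear_combination h'
        exact Or.inr (Or.inr (Or.inr (Or.inl (by rw [neg_sq, Complex.I_sq]))))
    · have hz3 : z3 = -z2 - 1 := by linear_combination h
      subst hz3
      have hq : (z2^2+z2-1)*(z2^2+z2+1) = 0 := by linear_combination key
      rcases mul_eq_zero.mp hq with hq | hq
      · have hq2 : (z2 - wA)*(z2 - wB) = 0 := by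
          unfold wA wB; linear_combination hq - (1/4)*hsq5
        rcases mul_eq_zero.mp hq2 with h' | h'
        · obtain rfl : z2 = wA := by linear_combination h'
          exact Or.inr (Or.inr (Or.inr (Or.inr (Or.inl rfl))))
        · obtain rfl : z2 = wB := by linear_combination h'
          exact Or.inr (Or.inr (Or.inr (Or.inr (Or.inr (Or.inl rfl)))))
      · have hq2 : (z2 - wC)*(z2 - wD) = 0 := by
          unfold wC wD; linear_combination hq - (Complex.I^2/4)*hsq3 - (3/4)*Complex.I_sq
        rcases mul_eq_zero.mp hq2 with h' | h'
        · obtain rfl : z2 = wC := by linear_combination h'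
          exact Or.inr (Or.inr (Or.inr (Or.inr (Or.inr (Or.inr (Or.inl rfl))))))
        · obtain rfl : z2 = wD := by linear_combination h'
          exact Or.inr (Or.inr (Or.inr (Or.inr (Or.inr (Or.inr (Or.inr rfl))))))
  · have hAne : wA ≠ 0 := by
      intro h; have := hA; rw [h] at this; norm_num at this
    have hBne : wB ≠ 0 := by
      intro h; have := hB; rw [h] at this; norm_num at this
    have hCne : wC ≠ 0 := by
      intro h; have := hC; rw [h] at this; norm_num at this
    have hDne : wD ≠ 0 := by
      intro h; have := hD; rw [h] at this; norm_num at this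
    have hvA : -wA - 1 ≠ 0 := by
      intro h; have h1 : wA = -1 := by linear_combination -h
      have := hA; rw [h1] at this; norm_num at this
    have hvB : -wB - 1 ≠ 0 := by
      intro h; have h1 : wB = -1 := by linear_combination -h
      have := hB; rw [h1] at this; norm_num at this
    have hvC : -wC - 1 ≠ 0 := by
      intro h; have h1 : wC = -1 := by linear_combination -h
      have := hC; rw [h1] at this; norm_num at this
    have hvD : -wD - 1 ≠ 0 := by
      intro h; have h1 : wD = -1 := by linear_combination -h
      have := hD; rw [h1] at this; norm_num at this
    rintro (rfl | rfl | rfl | rfl | rfl | rfl | rfl | rfl)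
    · simpa using sol_of 1 1 one_ne_zero one_ne_zero (by norm_num) (by ring)
    · simpa using sol_of (-1) (-1) (by norm_num) (by norm_num) (by norm_num) (by ring)
    · have := sol_of I I I_ne_zero I_ne_zero (by rw [Complex.I_sq]; norm_num) (by ring)
      rwa [Complex.I_sq] at this
    · have := sol_of (-I) (-I) (by simp) (by simp)
        (by rw [neg_sq, Complex.I_sq]; norm_num) (by ring)
      rwa [neg_sq, Complex.I_sq] at this
    · exact sol_of wA (-wA-1) hAne hvA (by linear_combination (wA^2+wA+1)*hA) (by ring)
    · exact sol_of wB (-wB-1) hBne hvB (by linear_combination (wB^2+wB+1)*hB) (by ring)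
    · exact sol_of wC (-wC-1) hCne hvC (by linear_combination (wC^2+wC-1)*hC) (by ring)
    · exact sol_of wD (-wD-1) hDne hvD (by linear_combination (wD^2+wD-1)*hD) (by ring)

end LGAux10

section Distinct
private lemma pt_ne {x y x' y' w w' : ℂ} (h : w ≠ w') :
    ((x, w, y) : ℂ × ℂ × ℂ) ≠ (x', w', y') :=
  fun he => h (congrArg (fun p => p.2.1) he)

private lemma ne_of_relA {w c : ℂ} (hw : w^2 + w - 1 = 0) (hc : c^2 + c - 1 ≠ 0) :
    w ≠ c := fun h => hc (h ▸ hw)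

private lemma ne_of_relC {w c : ℂ} (hw : w^2 + w + 1 = 0) (hc : c^2 + c + 1 ≠ 0) :
    w ≠ c := fun h => hc (h ▸ hw)

private lemma hs5ne : sq5 ≠ 0 := by
  unfold sq5
  simpa using Real.sqrt_ne_zero'.mpr (by norm_num : (0:ℝ) < 5)

private lemma hs3ne : sq3 ≠ 0 := by
  unfold sq3
  simpa using Real.sqrt_ne_zero'.mpr (by norm_num : (0:ℝ) < 3)

private lemma nI1 : ((1:ℂ)^2 + 1 - 1 ≠ 0) := by norm_num
private lemma relI : (I^2 + I - 1 : ℂ) ≠ 0 := by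
  rw [Complex.I_sq]
  intro h
  have : (I:ℂ) = 2 := by linear_combination h
  have := congrArg Complex.im this
  simp at this
private lemma relnI : ((-I)^2 + (-I) - 1 : ℂ) ≠ 0 := by
  rw [neg_sq, Complex.I_sq]
  intro h
  have : (I:ℂ) = -2 := by linear_combination -h
  have := congrArg Complex.im this
  simp at this
private lemma relIC : (I^2 + I + 1 : ℂ) ≠ 0 := by
  rw [Complex.I_sq]
  simpa using Complex.I_ne_zero
private lemma relnIC : ((-I)^2 + (-I) + 1 : ℂ) ≠ 0 := by
  rw [neg_sq, Complex.I_sq]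
  intro h
  exact Complex.I_ne_zero (by linear_combination -h)

private lemma nAB : wA ≠ wB := by
  intro h
  apply hs5ne
  have : (-1 + sq5)/2 = (-1 - sq5)/2 := h
  linear_combination this
private lemma nCD : wC ≠ wD := by
  intro h
  have h' : (-1 + sq3*I)/2 = (-1 - sq3*I)/2 := h
  have : sq3 * I = 0 := by linear_combination h'
  rcases mul_eq_zero.mp this with h'' | h''
  · exact hs3ne h''
  · exact Complex.I_ne_zero h''
private lemma nAC : wA ≠ wC := by
  intro h
  have h1 := hA
  have h2 := hC
  rw [← h] at h2
  have : (2:ℂ) = 0 := by linear_combination h2 - h1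
  norm_num at this
private lemma nAD : wA ≠ wD := by
  intro h
  have h1 := hA
  have h2 := hD
  rw [← h] at h2
  have : (2:ℂ) = 0 := by linear_combination h2 - h1
  norm_num at this
private lemma nBC : wB ≠ wC := by
  intro h
  have h1 := hB
  have h2 := hC
  rw [← h] at h2
  have : (2:ℂ) = 0 := by linear_combination h2 - h1
  norm_num at this
private lemma nBD : wB ≠ wD := by
  intro h
  have h1 := hB
  have h2 := hD
  rw [← h] at h2
  have : (2:ℂ) = 0 := by linear_combination h2 - h1
  norm_num at this

private lemma nA1 : wA ≠ 1 := ne_of_relA hA (by norm_num)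
private lemma nA2 : wA ≠ -1 := ne_of_relA hA (by norm_num)
private lemma nA3 : wA ≠ I := ne_of_relA hA relI
private lemma nA4 : wA ≠ -I := ne_of_relA hA relnI
private lemma nB1 : wB ≠ 1 := ne_of_relA hB (by norm_num)
private lemma nB2 : wB ≠ -1 := ne_of_relA hB (by norm_num)
private lemma nB3 : wB ≠ I := ne_of_relA hB relI
private lemma nB4 : wB ≠ -I := ne_of_relA hB relnI
private lemma nC1 : wC ≠ 1 := ne_of_relC hC (by norm_num)
private lemma nC2 : wC ≠ -1 := ne_of_relC hC (by norm_num)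
private lemma nC3 : wC ≠ I := ne_of_relC hC relIC
private lemma nC4 : wC ≠ -I := ne_of_relC hC relnIC
private lemma nD1 : wD ≠ 1 := ne_of_relC hD (by norm_num)
private lemma nD2 : wD ≠ -1 := ne_of_relC hD (by norm_num)
private lemma nD3 : wD ≠ I := ne_of_relC hD relIC
private lemma nD4 : wD ≠ -I := ne_of_relC hD relnIC

private lemma n12 : (1:ℂ) ≠ -1 := by norm_num
private lemma n13 : (1:ℂ) ≠ I := by
  intro h; have := congrArg Complex.im h; simp at this
private lemma n14 : (1:ℂ) ≠ -I := by
  intro h; have := congrArg Complex.im h; simp at this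
private lemma n23 : (-1:ℂ) ≠ I := by
  intro h; have := congrArg Complex.im h; simp at this
private lemma n24 : (-1:ℂ) ≠ -I := by
  intro h; have := congrArg Complex.im h; simp at this
private lemma n34 : (I:ℂ) ≠ -I := by
  intro h
  have : (2:ℂ)*I = 0 := by linear_combination h
  rcases mul_eq_zero.mp this with h' | h'
  · norm_num at h'
  · exact Complex.I_ne_zero h'

end Distinct

private lemma LGset_eq : LGset =
    {((1:ℂ), (1:ℂ), (1:ℂ)), (1, -1, -1), (-1, I, I), (-1, -I, -I),
     (wA^2, wA, -wA-1), (wB^2, wB, -wB-1), (wC^2, wC, -wC-1), (wD^2, wD, -wD-1)} := by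
  ext p
  rw [mem_iff]
  simp only [Set.mem_insert_iff, Set.mem_singleton_iff]

private lemma LGset_ncard : LGset.ncard = 8 := by
  rw [LGset_eq]
  rw [Set.ncard_insert_of_notMem (by
    simp only [Set.mem_insert_iff, Set.mem_singleton_iff]
    push_neg
    exact ⟨pt_ne n12, pt_ne n13, pt_ne n14, pt_ne nA1.symm, pt_ne nB1.symm,
      pt_ne nC1.symm, pt_ne nD1.symm⟩)]
  rw [Set.ncard_insert_of_notMem (by
    simp only [Set.mem_insert_iff, Set.mem_singleton_iff]
    push_neg
    exact ⟨pt_ne n23, pt_ne n24, pt_ne nA2.symm, pt_ne nB2.symm,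
      pt_ne nC2.symm, pt_ne nD2.symm⟩)]
  rw [Set.ncard_insert_of_notMem (by
    simp only [Set.mem_insert_iff, Set.mem_singleton_iff]
    push_neg
    exact ⟨pt_ne n34, pt_ne nA3.symm, pt_ne nB3.symm, pt_ne nC3.symm, pt_ne nD3.symm⟩)]
  rw [Set.ncard_insert_of_notMem (by
    simp only [Set.mem_insert_iff, Set.mem_singleton_iff]
    push_neg
    exact ⟨pt_ne nA4.symm, pt_ne nB4.symm, pt_ne nC4.symm, pt_ne nD4.symm⟩)]
  rw [Set.ncard_insert_of_notMem (by
    simp only [Set.mem_insert_iff, Set.mem_singleton_iff]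
    push_neg
    exact ⟨pt_ne nAB, pt_ne nAC, pt_ne nAD⟩)]
  rw [Set.ncard_insert_of_notMem (by
    simp only [Set.mem_insert_iff, Set.mem_singleton_iff]
    push_neg
    exact ⟨pt_ne nBC, pt_ne nBD⟩)]
  rw [Set.ncard_insert_of_notMem (by
    simp only [Set.mem_singleton_iff]
    exact pt_ne nCD)]
  rw [Set.ncard_singleton]



open Complex in
/-- The Landau-Ginzburg system of ℙ(𝒪_{ℙ¹×ℙ¹} ⊕ 𝒪_{ℙ¹×ℙ¹}(1,−1)):
`z₁ + z₁/z₂ - 1/(z₁z₃) - 1/z₁ = 0`, `z₂ - z₁/z₂ = 0`, `z₃ - 1/(z₁z₃) = 0`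
has exactly 8 distinct solutions in (ℂ*)³, including `(1,1,1)`, `(1,−1,−1)`,
`(−1,i,i)`, `(−1,−i,−i)`. -/
theorem stmt10 :
    Set.ncard {p : ℂ × ℂ × ℂ | p.1 ≠ 0 ∧ p.2.1 ≠ 0 ∧ p.2.2 ≠ 0 ∧
        p.1 + p.1 / p.2.1 - 1 / (p.1 * p.2.2) - 1 / p.1 = 0 ∧
        p.2.1 - p.1 / p.2.1 = 0 ∧ p.2.2 - 1 / (p.1 * p.2.2) = 0} = 8 ∧
    ({((1 : ℂ), (1 : ℂ), (1 : ℂ)), (1, -1, -1), (-1, I, I), (-1, -I, -I)} :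
        Set (ℂ × ℂ × ℂ)) ⊆
      {p : ℂ × ℂ × ℂ | p.1 ≠ 0 ∧ p.2.1 ≠ 0 ∧ p.2.2 ≠ 0 ∧
        p.1 + p.1 / p.2.1 - 1 / (p.1 * p.2.2) - 1 / p.1 = 0 ∧
        p.2.1 - p.1 / p.2.1 = 0 ∧ p.2.2 - 1 / (p.1 * p.2.2) = 0} := by
  constructor
  · exact LGset_ncard
  · intro p hp
    rcases hp with rfl | rfl | rfl | rfl
    · exact (mem_iff _).mpr (Or.inl rfl)
    · exact (mem_iff _).mpr (Or.inr (Or.inl rfl))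
    · exact (mem_iff _).mpr (Or.inr (Or.inr (Or.inl rfl)))
    · exact (mem_iff _).mpr (Or.inr (Or.inr (Or.inr (Or.inl rfl))))
end
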